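/- If the pair (A,B) is controllable in the PBH sense and the pair (Q,A) is observable in the PBH sense, then—counting algebraic multiplicity, i.e. in the multiset of complex roots of the characteristic polynomial of H_d—the discrete-time Hamiltonian matrix H_d has exactly n eigenvalues λ with |λ| < 1 and exactly n eigenvalues λ with |λ| > 1. -/

import Mathlib

/-!
`H_d` is symplectic, `H_d J H_dᵀ = J`, so `H_d⁻¹ = J⁻¹ H_dᵀ J` has the same characteristic
polynomial as `H_d`, and the multiset of eigenvalues is invariant under `λ ↦ λ⁻¹`. No eigenvalue
lies on the unit circle: for an eigenvector `(x, y)` with `|λ| = 1` the two block equations read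
`y - Q x = λ Aᵀ y` and `A x = λ (x + B R⁻¹ Bᵀ y)`, and pairing the first with `x` gives
`x* Q x + y* B R⁻¹ Bᵀ y = 0`. Hence `Q x = 0` and `Bᵀ y = 0`, so `A x = λ x` and `Aᵀ y = λ⁻¹ y`,
contradicting observability if `x ≠ 0` and controllability otherwise. Inversion therefore
exchanges the `2n` eigenvalues inside and outside the unit disc.
-/

open Matrix Polynomial

namespace Polynomial

variable {K : Type*} [Field K]

theorem reverse_multiset_prod (s : Multiset K[X]) : s.prod.reverse = (s.map reverse).prod := by
  induction s using Multiset.induction_on with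
  | empty => simpa using reverse_C (1 : K)
  | cons p s ih => simp [reverse_mul_of_domain, ih]

theorem reverse_X_sub_C {a : K} (ha : a ≠ 0) : (X - C a).reverse = C (-a) * (X - C a⁻¹) := by
  have hX : (X : K[X]).reverse = 1 := by
    simpa using (reverse_X_mul (1 : K[X])).trans (by simpa using reverse_C (1 : K))
  rw [sub_eq_add_neg, ← C_neg, reverse_add_C, hX, natDegree_X, pow_one, mul_sub, ← C_mul,
    neg_mul, mul_inv_cancel₀ ha]
  simp only [C_neg, C_1]
  ring

theorem roots_reverse {p : K[X]} (hp : p.Splits) (h0 : p.coeff 0 ≠ 0) :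
    p.reverse.roots = p.roots.map (·⁻¹) := by
  have hr : ∀ a ∈ p.roots, a ≠ 0 := by
    rintro a ha rfl
    exact h0 (by simpa [coeff_zero_eq_eval_zero] using (mem_roots'.mp ha).2)
  have hfac : p.roots.map (reverse ∘ fun a => X - C a) =
      p.roots.map fun a => C (-a) * (X - C a⁻¹) :=
    Multiset.map_congr rfl fun a ha => reverse_X_sub_C (hr a ha)
  have hinv : (p.roots.map fun a => X - C a⁻¹) = (p.roots.map (·⁻¹)).map fun a => X - C a := by
    rw [Multiset.map_map]; rfl
  have hp0 : p ≠ 0 := fun h => h0 (by simp [h])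
  conv_lhs => rw [hp.eq_prod_roots]
  rw [reverse_mul_of_domain, reverse_C, reverse_multiset_prod, Multiset.map_map, hfac,
    Multiset.prod_map_mul, ← mul_assoc, Multiset.prod_hom' p.roots C, ← C_mul, roots_C_mul,
    hinv, roots_multiset_prod_X_sub_C]
  exact mul_ne_zero (leadingCoeff_ne_zero.mpr hp0)
    (Multiset.prod_ne_zero fun h => by simpa using hr 0 (by simpa using h))

end Polynomial

namespace Multiset

variable {𝕜 : Type*} [NormedDivisionRing 𝕜] {s : Multiset 𝕜}

theorem card_filter_norm_lt_one_eq_card_filter_one_lt_norm (hs : s.map (·⁻¹) = s)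
    (h0 : (0 : 𝕜) ∉ s) :
    card (s.filter (‖·‖ < 1)) = card (s.filter (1 < ‖·‖)) := by
  conv_rhs => rw [← hs]
  rw [filter_map, card_map]
  congr 1
  refine filter_congr fun z hz => ?_
  have : 0 < ‖z‖ := norm_pos_iff.mpr (ne_of_mem_of_not_mem hz h0)
  simp [norm_inv, one_lt_inv_iff₀, this]

theorem card_filter_norm_lt_one_add_card_filter_one_lt_norm (h : ∀ z ∈ s, ‖z‖ ≠ 1) :
    card (s.filter (‖·‖ < 1)) + card (s.filter (1 < ‖·‖)) = card s := by
  conv_rhs => rw [← filter_add_not (‖·‖ < 1) s, card_add]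
  congr 2
  exact filter_congr fun z hz =>
    ⟨fun h1 => not_lt.2 h1.le, fun h1 => lt_of_le_of_ne (not_lt.1 h1) (h z hz).symm⟩

end Multiset

namespace Matrix

variable {ι κ : Type*} [Fintype ι] [Fintype κ]

theorem conjTranspose_map_ofReal {m n : Type*} (M : Matrix m n ℝ) :
    (M.map Complex.ofReal)ᴴ = Mᵀ.map Complex.ofReal := by
  ext i j
  simp [Complex.conj_ofReal]

open scoped ComplexOrder

theorem PosDef.conjTranspose_mulVec_eq_zero {𝕜 : Type*} [RCLike 𝕜] {R : Matrix κ κ 𝕜}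
    (hR : R.PosDef) {B : Matrix ι κ 𝕜} {y : ι → 𝕜} (h : (B * R * Bᴴ) *ᵥ y = 0) :
    Bᴴ *ᵥ y = 0 := by
  by_contra hw
  have hpos := hR.dotProduct_mulVec_pos hw
  rw [star_mulVec, conjTranspose_conjTranspose, ← dotProduct_mulVec, mulVec_mulVec,
    mulVec_mulVec, h, dotProduct_zero] at hpos
  exact hpos.false

variable [DecidableEq ι]

open scoped MatrixOrder in
theorem PosSemidef.map_ofReal {Q : Matrix ι ι ℝ} (hQ : Q.PosSemidef) :
    (Q.map Complex.ofReal).PosSemidef := by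
  obtain ⟨C, rfl⟩ := CStarAlgebra.nonneg_iff_eq_star_mul_self.mp hQ.nonneg
  have hC : (star C * C).map Complex.ofReal = (C.map Complex.ofReal)ᴴ * C.map Complex.ofReal := by
    rw [conjTranspose_map_ofReal, star_eq_conjTranspose, conjTranspose_eq_transpose_of_trivial]
    exact Matrix.map_mul (f := Complex.ofRealHom)
  exact hC ▸ posSemidef_conjTranspose_mul_self _

theorem PosDef.map_ofReal {R : Matrix ι ι ℝ} (hR : R.PosDef) : (R.map Complex.ofReal).PosDef :=
  hR.posSemidef.map_ofReal.posDef_iff_isUnit.mpr (hR.isUnit.map Complex.ofRealHom.mapMatrix)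

section Field

variable {K : Type*} [Field K] {M : Matrix ι ι K}

theorem exists_mulVec_eq_smul_of_mem_roots_charpoly {z : K} (hz : z ∈ M.charpoly.roots) :
    ∃ v ≠ 0, M *ᵥ v = z • v := by
  have hdet : (scalar ι z - M).det = 0 := by
    simpa [eval_charpoly] using (mem_roots'.mp hz).2
  obtain ⟨v, hv0, hv⟩ := exists_mulVec_eq_zero_iff.mpr hdet
  exact ⟨v, hv0, by simpa [sub_mulVec, sub_eq_zero, eq_comm] using hv⟩

theorem coeff_zero_charpoly_ne_zero (hM : IsUnit M) : M.charpoly.coeff 0 ≠ 0 := by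
  intro h
  have hdet := det_eq_sign_charpoly_coeff M
  rw [h, mul_zero] at hdet
  exact ((isUnit_iff_isUnit_det M).mp hM).ne_zero hdet

theorem zero_notMem_roots_charpoly (hM : IsUnit M) : (0 : K) ∉ M.charpoly.roots := fun h =>
  coeff_zero_charpoly_ne_zero hM (by simpa [coeff_zero_eq_eval_zero] using (mem_roots'.mp h).2)

theorem roots_charpoly_inv [IsAlgClosed K] (hM : IsUnit M) :
    M⁻¹.charpoly.roots = M.charpoly.roots.map (·⁻¹) := by
  have hc : (-1 : K[X]) ^ Fintype.card ι * C (Ring.inverse M.det) =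
      C ((-1) ^ Fintype.card ι * M.det⁻¹) := by
    simp [Ring.inverse_eq_inv']
  rw [charpoly_inv M hM, ← reverse_charpoly, hc, roots_C_mul,
    roots_reverse (IsAlgClosed.splits _) (coeff_zero_charpoly_ne_zero hM)]
  exact mul_ne_zero (by simp) (inv_ne_zero ((isUnit_iff_isUnit_det M).mp hM).ne_zero)

end Field

end Matrix

namespace SymplecticGroup

variable {ι : Type*} [Fintype ι] [DecidableEq ι]

theorem charpoly_inv {R : Type*} [CommRing R] {M : Matrix (ι ⊕ ι) (ι ⊕ ι) R}
    (hM : M ∈ symplecticGroup ι R) : M⁻¹.charpoly = M.charpoly := by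
  rw [inv_eq_symplectic_inv M hM, charpoly_mul_comm, ← Matrix.mul_assoc, Matrix.mul_neg,
    J_squared, neg_neg, Matrix.one_mul, charpoly_transpose]

theorem map_inv_roots_charpoly {K : Type*} [Field K] [IsAlgClosed K]
    {M : Matrix (ι ⊕ ι) (ι ⊕ ι) K} (hM : M ∈ symplecticGroup ι K) :
    M.charpoly.roots.map (·⁻¹) = M.charpoly.roots := by
  rw [← roots_charpoly_inv ((isUnit_iff_isUnit_det M).mpr (symplectic_det hM)), charpoly_inv hM]

end SymplecticGroup

/-- `H_d`, with `S` standing for `B R⁻¹ Bᵀ` and `G` for `A⁻ᵀ`. -/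
def discreteHamiltonian {ι α : Type*} [Fintype ι] [Ring α] (A Q S G : Matrix ι ι α) :
    Matrix (ι ⊕ ι) (ι ⊕ ι) α :=
  fromBlocks (A + S * G * Q) (-(S * G)) (-(G * Q)) G

section DiscreteHamiltonian

open scoped ComplexOrder

variable {ι κ : Type*} [Fintype ι] [Fintype κ]

theorem discreteHamiltonian_map {α β : Type*} [Ring α] [Ring β] (f : α →+* β)
    (A Q S G : Matrix ι ι α) :
    (discreteHamiltonian A Q S G).map f =
      discreteHamiltonian (A.map f) (Q.map f) (S.map f) (G.map f) := by
  simp [discreteHamiltonian, fromBlocks_map, Matrix.map_mul, Matrix.map_add, Matrix.map_neg]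

variable [DecidableEq ι]

theorem discreteHamiltonian_eigen_equations {R : Type*} [CommRing R] {A Q S G A' : Matrix ι ι R}
    (hG : A' * G = 1) {z : R} {x y : ι → R}
    (h : discreteHamiltonian A Q S G *ᵥ Sum.elim x y = z • Sum.elim x y) :
    y - Q *ᵥ x = z • A' *ᵥ y ∧ A *ᵥ x = z • x + z • S *ᵥ y := by
  have h₁ : (A + S * G * Q) *ᵥ x - (S * G) *ᵥ y = z • x := funext fun i => by
    simpa [discreteHamiltonian, fromBlocks_mulVec, neg_mulVec, sub_eq_add_neg] using
      congr_fun h (.inl i)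
  have h₂ : G *ᵥ (y - Q *ᵥ x) = z • y := funext fun i => by
    simpa [discreteHamiltonian, fromBlocks_mulVec, neg_mulVec, mulVec_sub, neg_add_eq_sub] using
      congr_fun h (.inr i)
  refine ⟨?_, ?_⟩
  · rw [← mulVec_smul, ← h₂, mulVec_mulVec, hG, one_mulVec]
  · rw [add_mulVec, ← mulVec_mulVec, ← mulVec_mulVec, ← mulVec_mulVec, add_sub_assoc,
      ← mulVec_sub, ← mulVec_sub, ← neg_sub, mulVec_neg, h₂, mulVec_neg, mulVec_smul] at h₁
    rw [← h₁]
    abel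

theorem discreteHamiltonian_eigenvector_of_norm_eq_one {𝕜 : Type*} [RCLike 𝕜]
    {A Q S G : Matrix ι ι 𝕜} (hG : Aᴴ * G = 1) (hQ : Q.PosSemidef) (hS : S.PosSemidef)
    {z : 𝕜} (hz : ‖z‖ = 1) {x y : ι → 𝕜}
    (h : discreteHamiltonian A Q S G *ᵥ Sum.elim x y = z • Sum.elim x y) :
    A *ᵥ x = z • x ∧ Q *ᵥ x = 0 ∧ Aᴴ *ᵥ y = star z • y ∧ S *ᵥ y = 0 := by
  obtain ⟨hy, hx⟩ := discreteHamiltonian_eigen_equations hG h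
  have hzz : star z * z = 1 := by simp [RCLike.star_def, RCLike.conj_mul, hz]
  have hxQx : star (Q *ᵥ x) ⬝ᵥ x = star x ⬝ᵥ Q *ᵥ x := by
    rw [star_mulVec, hQ.1.eq, ← dotProduct_mulVec]
  have hyAx : star (Aᴴ *ᵥ y) ⬝ᵥ x = star y ⬝ᵥ A *ᵥ x := by
    rw [star_mulVec, conjTranspose_conjTranspose, ← dotProduct_mulVec]
  -- Pair `y - Q x = z • Aᴴ y` with `x`: since `star z * z = 1`, the terms `star y ⬝ᵥ x` cancel.
  have hsum : star x ⬝ᵥ Q *ᵥ x + star y ⬝ᵥ S *ᵥ y = 0 := by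
    have h' := congr_arg (star · ⬝ᵥ x) hy
    simp only [star_sub, sub_dotProduct, star_smul, smul_dotProduct, hxQx, hyAx, hx,
      dotProduct_add, dotProduct_smul, smul_eq_mul] at h'
    linear_combination -h' - (star y ⬝ᵥ x + star y ⬝ᵥ S *ᵥ y) * hzz
  obtain ⟨hxQx0, hySy0⟩ := (add_eq_zero_iff_of_nonneg (hQ.dotProduct_mulVec_nonneg x)
    (hS.dotProduct_mulVec_nonneg y)).mp hsum
  have hQx := (hQ.dotProduct_mulVec_zero_iff x).mp hxQx0
  have hSy := (hS.dotProduct_mulVec_zero_iff y).mp hySy0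
  rw [hQx, sub_zero] at hy
  refine ⟨by rw [hx, hSy, smul_zero, add_zero], hQx, ?_, hSy⟩
  conv_rhs => rw [hy, smul_smul, hzz, one_smul]

theorem discreteHamiltonian_mem_symplecticGroup {R : Type*} [CommRing R]
    {A Q S G : Matrix ι ι R} (hG : Aᵀ * G = 1) (hQ : Qᵀ = Q) (hS : Sᵀ = S) :
    discreteHamiltonian A Q S G ∈ symplecticGroup ι R := by
  have hG' : Gᵀ * A = 1 := by simpa using congr_arg transpose hG
  have hGl : ∀ X : Matrix ι ι R, Aᵀ * (G * X) = X := fun X => by rw [← mul_assoc, hG, one_mul]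
  rw [discreteHamiltonian, SymplecticGroup.fromBlocks_mem_iff]
  simp only [transpose_add, transpose_mul, transpose_neg, hQ, hS, Matrix.mul_neg, Matrix.neg_mul,
    Matrix.add_mul, Matrix.mul_add, Matrix.mul_assoc, hG, hGl, hG', mul_one]
  exact ⟨by abel, trivial, by abel⟩

def PBHControllable (A : Matrix ι ι ℝ) (B : Matrix ι κ ℝ) : Prop :=
  ∀ (l : ℂ) (y : ι → ℂ), y ≠ 0 →
    (A.map Complex.ofReal)ᵀ *ᵥ y = l • y → (B.map Complex.ofReal)ᵀ *ᵥ y ≠ 0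

def PBHObservable (Q A : Matrix ι ι ℝ) : Prop :=
  ∀ (l : ℂ) (x : ι → ℂ), x ≠ 0 →
    A.map Complex.ofReal *ᵥ x = l • x → Q.map Complex.ofReal *ᵥ x ≠ 0

variable [DecidableEq κ]

theorem norm_ne_one_of_mem_roots_charpoly_discreteHamiltonian {A Q : Matrix ι ι ℝ}
    (hA : IsUnit A) (hQ : Q.PosSemidef) {B : Matrix ι κ ℝ} {R : Matrix κ κ ℝ} (hR : R.PosDef)
    (hctrb : PBHControllable A B) (hobs : PBHObservable Q A)
    {z : ℂ} (hz : z ∈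
      ((discreteHamiltonian A Q (B * R⁻¹ * Bᵀ) (Aᵀ)⁻¹).map Complex.ofReal).charpoly.roots) :
    ‖z‖ ≠ 1 := by
  intro hz1
  obtain ⟨v, hv0, hv⟩ := exists_mulVec_eq_smul_of_mem_roots_charpoly hz
  have hmap : (discreteHamiltonian A Q (B * R⁻¹ * Bᵀ) (Aᵀ)⁻¹).map Complex.ofReal =
      discreteHamiltonian (A.map Complex.ofReal) (Q.map Complex.ofReal)
        (B.map Complex.ofReal * R⁻¹.map Complex.ofReal * (B.map Complex.ofReal)ᴴ)
        ((Aᵀ)⁻¹.map Complex.ofReal) := by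
    rw [conjTranspose_map_ofReal, show Complex.ofReal = ⇑Complex.ofRealHom from rfl,
      discreteHamiltonian_map, Matrix.map_mul, Matrix.map_mul]
  have hG : (A.map Complex.ofReal)ᴴ * (Aᵀ)⁻¹.map Complex.ofReal = 1 := by
    rw [conjTranspose_map_ofReal]
    refine (Matrix.map_mul (f := Complex.ofRealHom)).symm.trans ?_
    rw [mul_nonsing_inv _ (by simpa using (isUnit_iff_isUnit_det A).mp hA)]
    simp
  have hR' : (R⁻¹.map Complex.ofReal).PosDef := hR.inv.map_ofReal
  rw [hmap, ← Sum.elim_comp_inl_inr v] at hv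
  obtain ⟨hAx, hQx, hAy, hSy⟩ := discreteHamiltonian_eigenvector_of_norm_eq_one hG
    hQ.map_ofReal (hR'.posSemidef.mul_mul_conjTranspose_same _) hz1 hv
  by_cases hx : v ∘ Sum.inl = 0
  · refine hctrb (star z) (v ∘ Sum.inr) (fun hy => hv0 ?_) ?_ ?_
    · rw [← Sum.elim_comp_inl_inr v, hx, hy, Sum.elim_zero_zero]
    · rwa [conjTranspose_map_ofReal, transpose_map] at hAy
    · rw [← transpose_map, ← conjTranspose_map_ofReal]
      exact hR'.conjTranspose_mulVec_eq_zero hSy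
  · exact hobs z _ hx hAx hQx

theorem card_filter_roots_charpoly_discreteHamiltonian {A Q : Matrix ι ι ℝ}
    (hA : IsUnit A) (hQ : Q.PosSemidef) {B : Matrix ι κ ℝ} {R : Matrix κ κ ℝ} (hR : R.PosDef)
    (hctrb : PBHControllable A B) (hobs : PBHObservable Q A) :
    Multiset.card (Multiset.filter (‖·‖ < 1)
      ((discreteHamiltonian A Q (B * R⁻¹ * Bᵀ) (Aᵀ)⁻¹).map Complex.ofReal).charpoly.roots) =
        Fintype.card ι ∧
    Multiset.card (Multiset.filter (1 < ‖·‖)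
      ((discreteHamiltonian A Q (B * R⁻¹ * Bᵀ) (Aᵀ)⁻¹).map Complex.ofReal).charpoly.roots) =
        Fintype.card ι := by
  have hAT : Aᵀ * (Aᵀ)⁻¹ = 1 := mul_nonsing_inv _ (by simpa using (isUnit_iff_isUnit_det A).mp hA)
  have hQs : Qᵀ = Q := (isHermitian_iff_isSymm.mp hQ.1).eq
  have hSs : (B * R⁻¹ * Bᵀ)ᵀ = B * R⁻¹ * Bᵀ := by
    rw [transpose_mul, transpose_mul, transpose_transpose, (isHermitian_iff_isSymm.mp hR.inv.1).eq,
      Matrix.mul_assoc]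
  have hsymp := SymplecticGroup.map_mem (discreteHamiltonian_mem_symplecticGroup hAT hQs hSs)
    Complex.ofRealHom
  set r := ((discreteHamiltonian A Q (B * R⁻¹ * Bᵀ) (Aᵀ)⁻¹).map Complex.ofReal).charpoly.roots
    with hr
  have hinv : r.map (·⁻¹) = r := SymplecticGroup.map_inv_roots_charpoly hsymp
  have h0 : (0 : ℂ) ∉ r := zero_notMem_roots_charpoly
    ((isUnit_iff_isUnit_det _).mpr (SymplecticGroup.symplectic_det hsymp))
  have hcirc : ∀ z ∈ r, ‖z‖ ≠ 1 := fun z hz =>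
    norm_ne_one_of_mem_roots_charpoly_discreteHamiltonian hA hQ hR hctrb hobs hz
  have hcard : Multiset.card r = Fintype.card ι + Fintype.card ι := by
    rw [hr, splits_iff_card_roots.mp (IsAlgClosed.splits _), charpoly_natDegree_eq_dim,
      Fintype.card_sum]
  have := Multiset.card_filter_norm_lt_one_eq_card_filter_one_lt_norm hinv h0
  have := Multiset.card_filter_norm_lt_one_add_card_filter_one_lt_norm hcirc
  omega

end DiscreteHamiltonian

/-- Under PBH controllability of `(A,B)` and PBH observability of
`(Q,A)`, counting algebraic multiplicity (roots of the characteristic polynomial), the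
discrete-time Hamiltonian matrix `H_d` has exactly `n` eigenvalues inside the unit circle
and exactly `n` eigenvalues outside the unit circle. -/
theorem discrete_hamiltonian_eigenvalue_count {n m : ℕ}
    (A Q : Matrix (Fin n) (Fin n) ℝ) (hA : IsUnit A) (hQ : Q.PosSemidef)
    (B : Matrix (Fin n) (Fin m) ℝ)
    (R : Matrix (Fin m) (Fin m) ℝ) (hR : R.PosDef)
    (hctrb : ∀ (l : ℂ) (y : Fin n → ℂ), y ≠ 0 →
      (A.map Complex.ofReal)ᵀ.mulVec y = l • y → (B.map Complex.ofReal)ᵀ.mulVec y ≠ 0)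
    (hobs : ∀ (l : ℂ) (x : Fin n → ℂ), x ≠ 0 →
      (A.map Complex.ofReal).mulVec x = l • x → (Q.map Complex.ofReal).mulVec x ≠ 0) :
    Multiset.card
        ((((Matrix.fromBlocks (A + B * R⁻¹ * Bᵀ * (Aᵀ)⁻¹ * Q) (-(B * R⁻¹ * Bᵀ * (Aᵀ)⁻¹))
            (-((Aᵀ)⁻¹ * Q)) ((Aᵀ)⁻¹)).map Complex.ofReal).charpoly.roots).filter
          fun z => ‖z‖ < 1) = n ∧
    Multiset.card
        ((((Matrix.fromBlocks (A + B * R⁻¹ * Bᵀ * (Aᵀ)⁻¹ * Q) (-(B * R⁻¹ * Bᵀ * (Aᵀ)⁻¹))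
            (-((Aᵀ)⁻¹ * Q)) ((Aᵀ)⁻¹)).map Complex.ofReal).charpoly.roots).filter
          fun z => 1 < ‖z‖) = n := by
  have h := card_filter_roots_charpoly_discreteHamiltonian hA hQ hR hctrb hobs
  rw [Fintype.card_fin] at h
  exact h
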